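/- Let B : [0,a_†] × ℝ → ℝ satisfy |B(x,s)| ≤ B_max and |B(x,s) − B(x,s')| ≤ L|s − s'| for all x ∈ [0,a_†], s, s' ∈ ℝ, and let Ψ_2 ∈ ℝ^{M−1} with max_i |Ψ_{2,i}| ≤ ψ_max. Then there exists C > 0 depending only on B_max, L, ψ_max, C_0 and a_† (independent of h) with the following property: for all scalars v_0, w_0 ∈ ℝ and all V, W ∈ ℝ^{M−1} with ‖V‖_∞ ≤ C_0 and ‖W‖_∞ ≤ C_0, setting p_0 = (1 + 1/h)v_0 − (1/h)V_1 − Q_h(B(Q_h(Ψ_2·V))·V) and r_0 = (1 + 1/h)w_0 − (1/h)W_1 − Q_h(B(Q_h(Ψ_2·W))·W), one has (1 + 1/h)|v_0 − w_0| − (1/h)|V_1 − W_1| ≤ |p_0 − r_0| + C‖V − W‖. -/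
import Mathlib


open scoped BigOperators

noncomputable section

/-- Composite quadrature rule `Q_h`. -/
def Qh (h : ℝ) (M' : ℕ) (V : ℕ → ℝ) : ℝ :=
  (4*h/3) * (2*V 1 - V 2 + 2*V 3)
    + (h/3) * ∑ i ∈ Finset.Icc 2 M', (V (2*i) + 4*V (2*i+1) + V (2*i+2))
    + (4*h/3) * (2*V (2*M'+3) - V (2*M'+4) + 2*V (2*M'+5))

/-- `‖V‖² = Σ_{i=1}^{M-1} h |V_i|²`. -/
def normSq (h : ℝ) (M : ℕ) (V : ℕ → ℝ) : ℝ :=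
  ∑ i ∈ Finset.Icc 1 (M-1), h * (V i)^2

lemma qh_sub (h : ℝ) (M' : ℕ) (f g : ℕ → ℝ) :
    Qh h M' f - Qh h M' g = Qh h M' (fun i => f i - g i) := by
  have hsum : ∑ i ∈ Finset.Icc 2 M',
      ((f (2*i) - g (2*i)) + 4*(f (2*i+1) - g (2*i+1)) + (f (2*i+2) - g (2*i+2)))
      = (∑ i ∈ Finset.Icc 2 M', (f (2*i) + 4*f (2*i+1) + f (2*i+2)))
        - ∑ i ∈ Finset.Icc 2 M', (g (2*i) + 4*g (2*i+1) + g (2*i+2)) := by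
    rw [← Finset.sum_sub_distrib]
    exact Finset.sum_congr rfl (fun i _ => by ring)
  simp only [Qh]
  rw [hsum]; ring

lemma qh_abs_le (h : ℝ) (hh : 0 ≤ h) (M' : ℕ) (U : ℕ → ℝ) :
    |Qh h M' U| ≤ 16 * ∑ i ∈ Finset.Icc 1 (2*M'+5), h * |U i| := by
  set T := Finset.Icc 1 (2*M'+5) with hT
  set A := ∑ i ∈ T, |U i| with hAdef
  have hA : 0 ≤ A := Finset.sum_nonneg fun i _ => abs_nonneg _
  have hmem : ∀ j, 1 ≤ j → j ≤ 2*M'+5 → |U j| ≤ A := by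
    intro j h1 h2
    exact Finset.single_le_sum (fun i _ => abs_nonneg (U i))
      (by simp [hT, Finset.mem_Icc]; omega)
  have key : ∀ k, k ≤ 2 → ∑ i ∈ Finset.Icc 2 M', |U (2*i+k)| ≤ A := by
    intro k hk
    rw [← Finset.sum_image (f := fun j => |U j|)
      (g := fun i => 2*i+k) (fun a _ b _ hab => by dsimp only at hab; omega)]
    apply Finset.sum_le_sum_of_subset_of_nonneg
    · intro j hj
      simp only [Finset.mem_image, Finset.mem_Icc] at hj
      obtain ⟨i, ⟨hi1, hi2⟩, rfl⟩ := hj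
      simp [hT, Finset.mem_Icc]; omega
    · intro i _ _; exact abs_nonneg _
  have hmid : ∑ i ∈ Finset.Icc 2 M', (U (2*i) + 4*U (2*i+1) + U (2*i+2)) ≤ 6*A ∧
      -(6*A) ≤ ∑ i ∈ Finset.Icc 2 M', (U (2*i) + 4*U (2*i+1) + U (2*i+2)) := by
    have h0 := key 0 (by omega)
    norm_num at h0
    have h1 := key 1 (by omega)
    have h2 := key 2 (by omega)
    have habs : |∑ i ∈ Finset.Icc 2 M', (U (2*i) + 4*U (2*i+1) + U (2*i+2))| ≤ 6*A := by
      calc |∑ i ∈ Finset.Icc 2 M', (U (2*i) + 4*U (2*i+1) + U (2*i+2))|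
          ≤ ∑ i ∈ Finset.Icc 2 M', |U (2*i) + 4*U (2*i+1) + U (2*i+2)| :=
            Finset.abs_sum_le_sum_abs _ _
        _ ≤ ∑ i ∈ Finset.Icc 2 M', (|U (2*i)| + 4*|U (2*i+1)| + |U (2*i+2)|) := by
            apply Finset.sum_le_sum
            intro i _
            have := abs_add_le (U (2*i) + 4*U (2*i+1)) (U (2*i+2))
            have := abs_add_le (U (2*i)) (4*U (2*i+1))
            have : |4*U (2*i+1)| = 4*|U (2*i+1)| := by
              rw [abs_mul]; norm_num
            have h4 := abs_add_le (U (2*i) + 4*U (2*i+1)) (U (2*i+2))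
            have h5 := abs_add_le (U (2*i)) (4*U (2*i+1))
            rw [abs_mul] at h5
            simp only [abs_of_nonneg (by norm_num : (0:ℝ) ≤ 4)] at h5
            linarith [h4, h5]
        _ ≤ 6*A := by
            rw [Finset.sum_add_distrib, Finset.sum_add_distrib, ← Finset.mul_sum]
            linarith
    exact ⟨(abs_le.mp habs).2, (abs_le.mp habs).1⟩
  have hb1 := abs_le.mp (hmem 1 (by omega) (by omega))
  have hb2 := abs_le.mp (hmem 2 (by omega) (by omega))
  have hb3 := abs_le.mp (hmem 3 (by omega) (by omega))
  have hb4 := abs_le.mp (hmem (2*M'+3) (by omega) (by omega))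
  have hb5 := abs_le.mp (hmem (2*M'+4) (by omega) (by omega))
  have hb6 := abs_le.mp (hmem (2*M'+5) (by omega) (by omega))
  have hrhs : ∑ i ∈ T, h * |U i| = h * A := by
    rw [hAdef, Finset.mul_sum]
  rw [hrhs]
  have hQ : |Qh h M' U| ≤ (46/3) * (h*A) := by
    rw [Qh]
    have hhA : 0 ≤ h * A := mul_nonneg hh hA
    rw [abs_le]
    constructor
    · nlinarith [hmid.1, hmid.2, mul_le_mul_of_nonneg_left hmid.2 (by linarith : (0:ℝ) ≤ h/3),
        mul_le_mul_of_nonneg_left hb1.1 hh, mul_le_mul_of_nonneg_left hb2.2 hh,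
        mul_le_mul_of_nonneg_left hb3.1 hh, mul_le_mul_of_nonneg_left hb4.1 hh,
        mul_le_mul_of_nonneg_left hb5.2 hh, mul_le_mul_of_nonneg_left hb6.1 hh]
    · nlinarith [mul_le_mul_of_nonneg_left hmid.1 (by linarith : (0:ℝ) ≤ h/3),
        mul_le_mul_of_nonneg_left hb1.2 hh, mul_le_mul_of_nonneg_left hb2.1 hh,
        mul_le_mul_of_nonneg_left hb3.2 hh, mul_le_mul_of_nonneg_left hb4.2 hh,
        mul_le_mul_of_nonneg_left hb5.1 hh, mul_le_mul_of_nonneg_left hb6.2 hh]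
  have hhA : 0 ≤ h * A := mul_nonneg hh hA
  linarith

/-- Boundary stability estimate: with `B` bounded by `B_max` and Lipschitz in `s` with
constant `L`, and `|Ψ_{2,i}| ≤ ψ_max`, there is `C > 0` depending only on
`B_max, L, ψ_max, C_0, a†` (independent of `h`) such that, with
`p_0 = (1+1/h)v_0 - (1/h)V_1 - Q_h(B(Q_h(Ψ_2·V))·V)` and
`r_0 = (1+1/h)w_0 - (1/h)W_1 - Q_h(B(Q_h(Ψ_2·W))·W)`, one has
`(1+1/h)|v_0 - w_0| - (1/h)|V_1 - W_1| ≤ |p_0 - r_0| + C ‖V - W‖`. -/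
theorem stmt_8 (adag Bmax L ψmax C0 : ℝ) (hadag : 0 < adag) (hBmax : 0 < Bmax)
    (hL : 0 < L) (hψmax : 0 < ψmax) (hC0 : 0 < C0) (B : ℝ → ℝ → ℝ)
    (hBb : ∀ x ∈ Set.Icc 0 adag, ∀ s : ℝ, |B x s| ≤ Bmax)
    (hBLip : ∀ x ∈ Set.Icc 0 adag, ∀ s s' : ℝ, |B x s - B x s'| ≤ L * |s - s'|) :
    ∃ C > 0, ∀ M' : ℕ, 0 < M' →
      let M := 2*(M'+3); let h := adag / (M : ℝ);
      ∀ Ψ2 : ℕ → ℝ, (∀ i, 1 ≤ i → i ≤ M-1 → |Ψ2 i| ≤ ψmax) →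
      ∀ (v0 w0 : ℝ) (V W : ℕ → ℝ),
        (∀ i, 1 ≤ i → i ≤ M-1 → |V i| ≤ C0) →
        (∀ i, 1 ≤ i → i ≤ M-1 → |W i| ≤ C0) →
        let p0 := (1 + 1/h) * v0 - (1/h) * V 1
          - Qh h M' (fun i => B ((i:ℝ)*h) (Qh h M' (fun j => Ψ2 j * V j)) * V i);
        let r0 := (1 + 1/h) * w0 - (1/h) * W 1
          - Qh h M' (fun i => B ((i:ℝ)*h) (Qh h M' (fun j => Ψ2 j * W j)) * W i);
        (1 + 1/h) * |v0 - w0| - (1/h) * |V 1 - W 1|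
          ≤ |p0 - r0| + C * Real.sqrt (normSq h M (fun i => V i - W i)) := by
  refine ⟨(16*Bmax + 256*L*ψmax*C0*adag) * Real.sqrt adag, ?_, ?_⟩
  · have h1 : (0:ℝ) < 256*L*ψmax*C0*adag := by positivity
    have h2 : (0:ℝ) < Real.sqrt adag := Real.sqrt_pos.mpr hadag
    exact mul_pos (by linarith) h2
  intro M' hM' M h Ψ2 hΨ2 v0 w0 V W hV hW p0 r0
  have hMdef : M = 2*(M'+3) := rfl
  have hhdef : h = adag / (M : ℝ) := rfl
  have hMpos : (0:ℝ) < (M:ℝ) := by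
    have : 0 < M := by omega
    exact_mod_cast this
  have hh : 0 < h := by rw [hhdef]; exact div_pos hadag hMpos
  have hMh : (M:ℝ) * h = adag := by
    rw [hhdef]; field_simp
  have hM1 : M - 1 = 2*M'+5 := by omega
  -- notation
  set D : ℕ → ℝ := fun i => V i - W i with hD
  set S : ℝ := ∑ i ∈ Finset.Icc 1 (M-1), h * |D i| with hSdef
  have hS0 : 0 ≤ S := Finset.sum_nonneg fun i _ => mul_nonneg hh.le (abs_nonneg _)
  have hcard : (Finset.Icc 1 (M-1)).card = M - 1 := by
    rw [Nat.card_Icc]; omega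
  have hsumh : ∑ _i ∈ Finset.Icc 1 (M-1), h = ((M-1 : ℕ) : ℝ) * h := by
    rw [Finset.sum_const, hcard, nsmul_eq_mul]
  have hMhle : ((M-1 : ℕ) : ℝ) * h ≤ adag := by
    rw [← hMh]
    apply mul_le_mul_of_nonneg_right _ hh.le
    exact_mod_cast Nat.sub_le M 1
  -- Cauchy-Schwarz: S ≤ √adag * √(normSq)
  set N : ℝ := normSq h M D with hNdef
  have hN0 : 0 ≤ N := Finset.sum_nonneg fun i _ => mul_nonneg hh.le (sq_nonneg _)
  have hCS : S ≤ Real.sqrt adag * Real.sqrt N := by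
    have hsq : S^2 ≤ adag * N := by
      have h1 : S = ∑ i ∈ Finset.Icc 1 (M-1),
          Real.sqrt h * (Real.sqrt h * |D i|) := by
        rw [hSdef]
        refine Finset.sum_congr rfl fun i _ => ?_
        rw [← mul_assoc, Real.mul_self_sqrt hh.le]
      have h2 := Finset.sum_mul_sq_le_sq_mul_sq (Finset.Icc 1 (M-1))
        (fun _ => Real.sqrt h) (fun i => Real.sqrt h * |D i|)
      have h3 : ∑ _i ∈ Finset.Icc 1 (M-1), Real.sqrt h ^ 2 = ((M-1 : ℕ) : ℝ) * h := by
        rw [Finset.sum_congr rfl fun i _ => Real.sq_sqrt hh.le, hsumh]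
      have h4 : ∑ i ∈ Finset.Icc 1 (M-1), (Real.sqrt h * |D i|) ^ 2 = N := by
        rw [hNdef, normSq]
        refine Finset.sum_congr rfl fun i _ => ?_
        rw [mul_pow, Real.sq_sqrt hh.le, sq_abs]
      rw [h3, h4] at h2
      rw [h1]
      exact h2.trans (mul_le_mul_of_nonneg_right hMhle hN0)
    calc S = Real.sqrt (S^2) := (Real.sqrt_sq hS0).symm
      _ ≤ Real.sqrt (adag * N) := Real.sqrt_le_sqrt hsq
      _ = Real.sqrt adag * Real.sqrt N := Real.sqrt_mul hadag.le N
  -- difference of inner quadratures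
  set sV : ℝ := Qh h M' (fun j => Ψ2 j * V j) with hsV
  set sW : ℝ := Qh h M' (fun j => Ψ2 j * W j) with hsW
  have hs : |sV - sW| ≤ 16 * (ψmax * S) := by
    rw [hsV, hsW, qh_sub]
    refine (qh_abs_le h hh.le M' _).trans ?_
    have : ∑ i ∈ Finset.Icc 1 (2*M'+5), h * |Ψ2 i * V i - Ψ2 i * W i| ≤ ψmax * S := by
      rw [hSdef, ← hM1, Finset.mul_sum]
      apply Finset.sum_le_sum
      intro i hi
      rw [Finset.mem_Icc, hM1] at hi
      have h1 : |Ψ2 i * V i - Ψ2 i * W i| = |Ψ2 i| * |D i| := by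
        rw [← abs_mul, hD]; ring_nf
      rw [h1]
      have h2 : |Ψ2 i| ≤ ψmax := hΨ2 i hi.1 (by omega)
      have := mul_le_mul_of_nonneg_right h2 (abs_nonneg (D i))
      nlinarith [abs_nonneg (D i), hh.le]
    linarith
  -- difference of outer quadratures
  set K : ℝ := L * (16 * (ψmax * S)) * C0 with hK
  have hK0 : 0 ≤ K := by
    have := mul_nonneg hψmax.le hS0
    positivity
  have hΔ : |Qh h M' (fun i => B ((i:ℝ)*h) sV * V i)
      - Qh h M' (fun i => B ((i:ℝ)*h) sW * W i)|
      ≤ 16 * (Bmax * S + K * (((M-1 : ℕ) : ℝ) * h)) := by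
    rw [qh_sub]
    refine (qh_abs_le h hh.le M' _).trans ?_
    have hbnd : ∑ i ∈ Finset.Icc 1 (2*M'+5),
        h * |B ((i:ℝ)*h) sV * V i - B ((i:ℝ)*h) sW * W i|
        ≤ Bmax * S + K * (((M-1 : ℕ) : ℝ) * h) := by
      have step : ∀ i ∈ Finset.Icc 1 (2*M'+5),
          h * |B ((i:ℝ)*h) sV * V i - B ((i:ℝ)*h) sW * W i|
          ≤ h * (Bmax * |D i| + K) := by
        intro i hi
        rw [Finset.mem_Icc] at hi
        have hx : ((i:ℝ)*h) ∈ Set.Icc 0 adag := by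
          constructor
          · positivity
          · rw [← hMh]
            apply mul_le_mul_of_nonneg_right _ hh.le
            have : (i:ℝ) ≤ (M:ℝ) := by
              have : i ≤ M := by omega
              exact_mod_cast this
            exact this
        apply mul_le_mul_of_nonneg_left _ hh.le
        have e : B ((i:ℝ)*h) sV * V i - B ((i:ℝ)*h) sW * W i
            = B ((i:ℝ)*h) sV * (V i - W i) + (B ((i:ℝ)*h) sV - B ((i:ℝ)*h) sW) * W i := by
          ring
        rw [e]
        have t1 : |B ((i:ℝ)*h) sV * (V i - W i)| ≤ Bmax * |D i| := by
          rw [abs_mul, hD]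
          exact mul_le_mul_of_nonneg_right (hBb _ hx sV) (abs_nonneg _)
        have t2 : |(B ((i:ℝ)*h) sV - B ((i:ℝ)*h) sW) * W i| ≤ K := by
          rw [abs_mul, hK]
          have l1 : |B ((i:ℝ)*h) sV - B ((i:ℝ)*h) sW| ≤ L * (16 * (ψmax * S)) := by
            refine (hBLip _ hx sV sW).trans ?_
            exact mul_le_mul_of_nonneg_left hs hL.le
          have l2 : |W i| ≤ C0 := hW i hi.1 (by omega)
          exact mul_le_mul l1 l2 (abs_nonneg _) (by positivity)
        calc |B ((i:ℝ)*h) sV * (V i - W i) + (B ((i:ℝ)*h) sV - B ((i:ℝ)*h) sW) * W i|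
            ≤ |B ((i:ℝ)*h) sV * (V i - W i)| + |(B ((i:ℝ)*h) sV - B ((i:ℝ)*h) sW) * W i| :=
              abs_add_le _ _
          _ ≤ Bmax * |D i| + K := add_le_add t1 t2
      refine (Finset.sum_le_sum step).trans ?_
      have expand : ∑ i ∈ Finset.Icc 1 (2*M'+5), h * (Bmax * |D i| + K)
          = Bmax * S + K * (((M-1 : ℕ) : ℝ) * h) := by
        rw [hSdef, ← hM1, ← hsumh, Finset.mul_sum, Finset.mul_sum, ← Finset.sum_add_distrib]
        exact Finset.sum_congr rfl fun i _ => by ring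
      rw [← expand]
    linarith
  -- assemble
  have hp0 : p0 = (1 + 1/h) * v0 - (1/h) * V 1
      - Qh h M' (fun i => B ((i:ℝ)*h) sV * V i) := rfl
  have hr0 : r0 = (1 + 1/h) * w0 - (1/h) * W 1
      - Qh h M' (fun i => B ((i:ℝ)*h) sW * W i) := rfl
  set G : ℝ := Qh h M' (fun i => B ((i:ℝ)*h) sV * V i)
    - Qh h M' (fun i => B ((i:ℝ)*h) sW * W i) with hG
  have hE : (1 + 1/h) * (v0 - w0) = (p0 - r0) + (1/h) * (V 1 - W 1) + G := by
    rw [hp0, hr0, hG]; ring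
  have habs1 : (1 + 1/h) * |v0 - w0| = |(1 + 1/h) * (v0 - w0)| := by
    rw [abs_mul, abs_of_pos (by positivity : (0:ℝ) < 1 + 1/h)]
  have habs2 : (1/h) * |V 1 - W 1| = |(1/h) * (V 1 - W 1)| := by
    rw [abs_mul, abs_of_pos (by positivity : (0:ℝ) < 1/h)]
  have htri : |(1 + 1/h) * (v0 - w0)| ≤ |p0 - r0| + |(1/h) * (V 1 - W 1)| + |G| := by
    rw [hE]
    calc |(p0 - r0) + (1/h) * (V 1 - W 1) + G|
        ≤ |(p0 - r0) + (1/h) * (V 1 - W 1)| + |G| := abs_add_le _ _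
      _ ≤ |p0 - r0| + |(1/h) * (V 1 - W 1)| + |G| := by
          linarith [abs_add_le (p0 - r0) ((1/h) * (V 1 - W 1))]
  have hGfin : |G| ≤ (16*Bmax + 256*L*ψmax*C0*adag) * Real.sqrt adag * Real.sqrt N := by
    refine hΔ.trans ?_
    have h1 : 16 * (Bmax * S + K * (((M-1 : ℕ) : ℝ) * h))
        ≤ (16*Bmax + 256*L*ψmax*C0*adag) * S := by
      have h2 : K * (((M-1 : ℕ) : ℝ) * h) ≤ K * adag :=
        mul_le_mul_of_nonneg_left hMhle hK0
      have h3 : 16 * (K * adag) = 256*L*ψmax*C0*adag*S := by rw [hK]; ring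
      linarith [h2, h3]
    refine h1.trans ?_
    have h4 : (0:ℝ) < 256*L*ψmax*C0*adag := by positivity
    calc (16*Bmax + 256*L*ψmax*C0*adag) * S
        ≤ (16*Bmax + 256*L*ψmax*C0*adag) * (Real.sqrt adag * Real.sqrt N) :=
          mul_le_mul_of_nonneg_left hCS (by linarith)
      _ = (16*Bmax + 256*L*ψmax*C0*adag) * Real.sqrt adag * Real.sqrt N := by ring
  linarith [htri, hGfin, habs1, habs2]
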